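/- arXiv:2302.09573 — 3 statements merged into one kernel-verified Lean document; each statement's English description precedes it below -/
import Mathlib

section
/- Let G and F be locally compact, second countable Hausdorff topological groups with left Haar measures μ (on G) and ν (on F). Let Y ⊆ G be an open set and α: Y → F a continuous map. Suppose Φ: L^∞(F, ν) → L^∞(G, μ) is a linear map that is continuous for the weak* topologies and satisfies: for every u ∈ C₀(F), Φ(u) is μ-a.e. equal to the function t ↦ u(α(t)) for t ∈ Y and 0 for t ∈ G∖Y. Then: (a) for every bounded Borel function u: F → ℂ, Φ applied to the ν-class of u is μ-a.e. equal to the function t ↦ u(α(t)) for t ∈ Y and 0 for t ∈ G∖Y (in particular Φ is a *-homomorphism); and (b) the pushforward measure α_*μ_Y is absolutely continuous with respect to ν. -/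
open MeasureTheory Set Filter Topology
open scoped ENNReal NNReal ZeroAtInfty

/-- The weak* topology on `L^∞(μ)`, viewed as the dual of `L¹(μ)`: the coarsest topology
making all the functionals `u ↦ ∫ u·h dμ`, for `h ∈ L¹(μ)`, continuous.  A net converges in
this topology iff all these integrals converge. -/
noncomputable def weakStarTopology {α : Type*} [MeasurableSpace α] (μ : Measure α) :
    TopologicalSpace (Lp ℂ ⊤ μ) :=
  TopologicalSpace.induced
    (fun u : Lp ℂ ⊤ μ => fun h : Lp ℂ 1 μ => ∫ x, (u : α → ℂ) x * (h : α → ℂ) x ∂μ)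
    inferInstance

private lemma tendsto_ws_iff {X : Type*} [MeasurableSpace X] (ρ : Measure X)
    (V : ℕ → Lp ℂ ⊤ ρ) (v : Lp ℂ ⊤ ρ) :
    @Filter.Tendsto ℕ _ V atTop (@nhds _ (weakStarTopology ρ) v) ↔
      ∀ h : Lp ℂ 1 ρ, Tendsto (fun n => ∫ x, (V n : X → ℂ) x * (h : X → ℂ) x ∂ρ) atTop
        (𝓝 (∫ x, (v : X → ℂ) x * (h : X → ℂ) x ∂ρ)) := by
  set gm : Lp ℂ ⊤ ρ → (Lp ℂ 1 ρ) → ℂ :=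
    fun u => fun h : Lp ℂ 1 ρ => ∫ x, (u : X → ℂ) x * (h : X → ℂ) x ∂ρ with hgm
  have h0 : @nhds _ (weakStarTopology ρ) v = Filter.comap gm (𝓝 (gm v)) := nhds_induced gm v
  rw [h0, tendsto_comap_iff]
  rw [tendsto_pi_nhds]
  exact Iff.rfl

private lemma seq_cont {G F : Type*} [MeasurableSpace G] [MeasurableSpace F]
    (μ : Measure G) (ν : Measure F)
    (Φ : Lp ℂ ⊤ ν →ₗ[ℂ] Lp ℂ ⊤ μ)
    (hcont : @Continuous _ _ (weakStarTopology ν) (weakStarTopology μ) Φ)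
    (U : ℕ → Lp ℂ ⊤ ν) (u : Lp ℂ ⊤ ν)
    (h1 : ∀ h : Lp ℂ 1 ν, Tendsto (fun n => ∫ x, (U n : F → ℂ) x * (h : F → ℂ) x ∂ν) atTop
      (𝓝 (∫ x, (u : F → ℂ) x * (h : F → ℂ) x ∂ν))) :
    ∀ k : Lp ℂ 1 μ, Tendsto (fun n => ∫ x, (Φ (U n) : G → ℂ) x * (k : G → ℂ) x ∂μ) atTop
      (𝓝 (∫ x, (Φ u : G → ℂ) x * (k : G → ℂ) x ∂μ)) := by
  have t1 : @Filter.Tendsto ℕ _ U atTop (@nhds _ (weakStarTopology ν) u) :=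
    (tendsto_ws_iff ν U u).mpr h1
  have t2 : @Filter.Tendsto ℕ _ (fun n => Φ (U n)) atTop (@nhds _ (weakStarTopology μ) (Φ u)) :=
    (@Continuous.tendsto _ _ (weakStarTopology ν) (weakStarTopology μ) _ hcont u).comp t1
  exact (tendsto_ws_iff μ (fun n => Φ (U n)) (Φ u)).mp t2

private lemma dct_mul {X : Type*} [MeasurableSpace X] {ρ : Measure X}
    (φ : ℕ → X → ℂ) (f : X → ℂ) (C : ℝ)
    (hm : ∀ n, AEStronglyMeasurable (φ n) ρ)
    (hb : ∀ n, ∀ᵐ x ∂ρ, ‖φ n x‖ ≤ C)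
    (hlim : ∀ᵐ x ∂ρ, Tendsto (fun n => φ n x) atTop (𝓝 (f x)))
    (h : Lp ℂ 1 ρ) :
    Tendsto (fun n => ∫ x, φ n x * (h : X → ℂ) x ∂ρ) atTop
      (𝓝 (∫ x, f x * (h : X → ℂ) x ∂ρ)) := by
  apply tendsto_integral_of_dominated_convergence (fun x => C * ‖(h : X → ℂ) x‖)
  · exact fun n => (hm n).mul (Lp.aestronglyMeasurable h)
  · exact (L1.integrable_coeFn h).norm.const_mul C
  · intro n
    filter_upwards [hb n] with x hx
    rw [norm_mul]
    exact mul_le_mul_of_nonneg_right hx (norm_nonneg _)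
  · filter_upwards [hlim] with x hx
    exact hx.mul_const _

private lemma sep {X : Type*} [MeasurableSpace X] {ρ : Measure X} [SigmaFinite ρ]
    {f g : X → ℂ} (hf : AEStronglyMeasurable f ρ) (hg : AEStronglyMeasurable g ρ)
    {C : ℝ} (hfb : ∀ᵐ x ∂ρ, ‖f x‖ ≤ C) (hgb : ∀ᵐ x ∂ρ, ‖g x‖ ≤ C)
    (H : ∀ k : Lp ℂ 1 ρ, ∫ x, f x * (k : X → ℂ) x ∂ρ = ∫ x, g x * (k : X → ℂ) x ∂ρ) :
    f =ᵐ[ρ] g := by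
  set d : X → ℂ := fun x => f x - g x with hd
  have hdm : AEStronglyMeasurable d ρ := hf.sub hg
  have hdb : ∀ᵐ x ∂ρ, ‖d x‖ ≤ C + C := by
    filter_upwards [hfb, hgb] with x h1 h2
    exact (norm_sub_le _ _).trans (add_le_add h1 h2)
  have key : ∀ᵐ x ∂ρ, ∀ m : ℕ, x ∈ spanningSets ρ m → d x = 0 := by
    rw [ae_all_iff]
    intro m
    set s := spanningSets ρ m with hs
    have hsm : MeasurableSet s := measurableSet_spanningSets ρ m
    have hsfin : ρ s < ∞ := measure_spanningSets_lt_top ρ m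
    rw [← ae_restrict_iff' hsm]
    set k₀ : X → ℂ := s.indicator (fun x => (starRingEnd ℂ) (d x)) with hk₀
    have hk₀i : Integrable k₀ ρ := by
      rw [hk₀, integrable_indicator_iff hsm]
      exact Measure.integrableOn_of_bounded hsfin.ne (continuous_star.comp_aestronglyMeasurable hdm)
        (ae_restrict_of_ae (by filter_upwards [hdb] with x hx; simpa using hx))
    have hmem : MemLp k₀ 1 ρ := memLp_one_iff_integrable.mpr hk₀i
    have hH := H (hmem.toLp k₀)
    have hcoe := hmem.coeFn_toLp
    rw [integral_congr_ae (by filter_upwards [hcoe] with x hx; rw [hx] : (fun x => f x * (hmem.toLp k₀ : X → ℂ) x) =ᵐ[ρ] fun x => f x * k₀ x),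
        integral_congr_ae (by filter_upwards [hcoe] with x hx; rw [hx] : (fun x => g x * (hmem.toLp k₀ : X → ℂ) x) =ᵐ[ρ] fun x => g x * k₀ x)] at hH
    have hfi : Integrable (fun x => f x * k₀ x) ρ := hk₀i.bdd_mul hf hfb
    have hgi : Integrable (fun x => g x * k₀ x) ρ := hk₀i.bdd_mul hg hgb
    have hzero : ∫ x, d x * k₀ x ∂ρ = 0 := by
      have : (fun x => d x * k₀ x) = fun x => f x * k₀ x - g x * k₀ x := by
        funext x; rw [hd]; ring
      rw [this, integral_sub hfi hgi, hH, sub_self]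
    have heq : (fun x => d x * k₀ x) = s.indicator (fun x => ((Complex.normSq (d x) : ℝ) : ℂ)) := by
      funext x
      by_cases hx : x ∈ s
      · simp only [hk₀, indicator_of_mem hx, Complex.mul_conj]
      · simp [hk₀, indicator_of_notMem hx]
    rw [heq, integral_indicator hsm] at hzero
    have hreal : ∫ x in s, Complex.normSq (d x) ∂ρ = 0 := by
      have := hzero
      rw [show (∫ x in s, ((Complex.normSq (d x) : ℝ) : ℂ) ∂ρ) = ((∫ x in s, Complex.normSq (d x) ∂ρ : ℝ) : ℂ) from integral_ofReal] at this
      exact_mod_cast this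
    have hint : Integrable (fun x => Complex.normSq (d x)) (ρ.restrict s) := by
      apply Measure.integrableOn_of_bounded hsfin.ne
        (Complex.continuous_normSq.comp_aestronglyMeasurable hdm) (M := (C + C) ^ 2)
      filter_upwards [ae_restrict_of_ae hdb] with x hx
      have h2 : Complex.normSq (d x) = ‖d x‖ ^ 2 := by
        rw [← Complex.sq_norm]
      rw [Real.norm_eq_abs, abs_of_nonneg (Complex.normSq_nonneg _), h2]
      exact pow_le_pow_left₀ (norm_nonneg _) hx 2
    have := (integral_eq_zero_iff_of_nonneg (fun x => Complex.normSq_nonneg (d x)) hint).mp hreal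
    filter_upwards [this] with x hx
    exact Complex.normSq_eq_zero.mp hx
  filter_upwards [key] with x hx
  have hex : ∃ m, x ∈ spanningSets ρ m := by
    have h1 := iUnion_spanningSets ρ
    have hx' : x ∈ ⋃ m, spanningSets ρ m := by rw [h1]; trivial
    exact mem_iUnion.mp hx'
  obtain ⟨m, hm⟩ := hex
  have := hx m hm
  rw [hd] at this
  simpa [sub_eq_zero] using this

set_option maxHeartbeats 4000000 in
/-- Proposition 2.1, first part: if a weak*-continuous linear map `Φ : L^∞(F) → L^∞(G)`
agrees with `u ↦ χ_Y · (u ∘ α)` on `C₀(F)`, then it is given by the same formula on all bounded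
Borel functions (in particular it is a *-homomorphism), and `α_* μ_Y ≪ ν`. -/
theorem stmt0
    {G F : Type*} [Group G] [TopologicalSpace G] [IsTopologicalGroup G]
    [LocallyCompactSpace G] [SecondCountableTopology G] [T2Space G]
    [MeasurableSpace G] [BorelSpace G]
    [Group F] [TopologicalSpace F] [IsTopologicalGroup F]
    [LocallyCompactSpace F] [SecondCountableTopology F] [T2Space F]
    [MeasurableSpace F] [BorelSpace F]
    (μ : Measure G) [μ.IsHaarMeasure] (ν : Measure F) [ν.IsHaarMeasure]
    (Y : Set G) (hY : IsOpen Y) (α : G → F) (hα : ContinuousOn α Y)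
    (Φ : Lp ℂ ⊤ ν →ₗ[ℂ] Lp ℂ ⊤ μ)
    (hcont : @Continuous _ _ (weakStarTopology ν) (weakStarTopology μ) Φ)
    (hC0 : ∀ (u : C₀(F, ℂ)) (hu : MemLp (⇑u) ⊤ ν),
      ⇑(Φ (hu.toLp ⇑u)) =ᵐ[μ] Y.indicator (fun t => u (α t))) :
    (∀ (u : F → ℂ), Measurable u → (∃ C, ∀ x, ‖u x‖ ≤ C) → ∀ (hu : MemLp u ⊤ ν),
        ⇑(Φ (hu.toLp u)) =ᵐ[μ] Y.indicator (fun t => u (α t)))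
    ∧ (∀ u v w : Lp ℂ ⊤ ν, ⇑w =ᵐ[ν] (fun x => u x * v x) →
        ⇑(Φ w) =ᵐ[μ] (fun x => (Φ u) x * (Φ v) x))
    ∧ (∀ u w : Lp ℂ ⊤ ν, ⇑w =ᵐ[ν] (fun x => star (u x)) →
        ⇑(Φ w) =ᵐ[μ] (fun x => star ((Φ u) x)))
    ∧ Measure.map α (μ.restrict Y) ≪ ν := by
  have hYm : MeasurableSet Y := hY.measurableSet
  -- a genuinely measurable modification β of α
  have hαae : AEMeasurable α (μ.restrict Y) := hα.aemeasurable hYm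
  set β := hαae.mk α with hβdef
  have hβ : Measurable β := hαae.measurable_mk
  have hαβ : α =ᵐ[μ.restrict Y] β := hαae.ae_eq_mk
  have hN : ∀ᵐ t ∂μ, t ∈ Y → α t = β t := (ae_restrict_iff' hYm).mp hαβ
  have hind : ∀ w : F → ℂ,
      Y.indicator (fun t => w (α t)) =ᵐ[μ] Y.indicator (fun t => w (β t)) := by
    intro w
    filter_upwards [hN] with t ht
    by_cases htY : t ∈ Y
    · rw [indicator_of_mem htY, indicator_of_mem htY, ht htY]
    · rw [indicator_of_notMem htY, indicator_of_notMem htY]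
  -- compact exhaustion of G
  set K : CompactExhaustion G := CompactExhaustion.choice G with hK
  have hcover : ∀ S : Set G, (∀ m, μ (S ∩ K m) = 0) → μ S = 0 := by
    intro S h
    have hsub : S ⊆ ⋃ m, S ∩ K m := fun x hx => mem_iUnion.2 ⟨K.find x, hx, K.mem_find x⟩
    exact measure_mono_null hsub (measure_iUnion_null h)
  -- Step 1 (Urysohn): the key vanishing property for compact null sets
  have UR : ∀ K' : Set F, IsCompact K' → ν K' = 0 → μ (Y ∩ β ⁻¹' K') = 0 := by
    intro K' hK' hνK'
    -- shrinking open neighborhoods of K'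
    have hU : ∀ n : ℕ, ∃ U, K' ⊆ U ∧ IsOpen U ∧ ν U < ((n : ℝ≥0∞) + 1)⁻¹ := by
      intro n
      have hpos : (0 : ℝ≥0∞) < ((n : ℝ≥0∞) + 1)⁻¹ := by
        apply ENNReal.inv_pos.mpr
        exact ENNReal.add_ne_top.mpr ⟨ENNReal.natCast_ne_top n, ENNReal.one_ne_top⟩
      obtain ⟨U, hU1, hU2, hU3⟩ := Set.exists_isOpen_lt_of_lt K' _ (by rw [hνK']; exact hpos)
      exact ⟨U, hU1, hU2, hU3⟩
    choose U hUK hUo hUs using hU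
    set V : ℕ → Set F := fun n => ⋂ i ∈ Finset.range (n + 1), U i with hV
    have hVo : ∀ n, IsOpen (V n) := fun n => isOpen_biInter_finset (fun i _ => hUo i)
    have hVK : ∀ n, K' ⊆ V n := fun n => subset_iInter₂ fun i _ => hUK i
    have hVs : ∀ n, ν (V n) < ((n : ℝ≥0∞) + 1)⁻¹ := by
      intro n
      refine lt_of_le_of_lt (measure_mono ?_) (hUs n)
      exact biInter_subset_of_mem (Finset.self_mem_range_succ n)
    -- Urysohn functions
    have hf : ∀ n, ∃ f : C(F, ℝ), EqOn f 1 K' ∧ EqOn f 0 (V n)ᶜ ∧ HasCompactSupport f ∧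
        ∀ x, f x ∈ Icc (0 : ℝ) 1 := fun n =>
      exists_continuous_one_zero_of_isCompact hK' (hVo n).isClosed_compl
        (Set.disjoint_left.mpr fun x hx hxc => hxc (hVK n hx))
    choose f hf1 hf0 hfc hf01 using hf
    -- decreasing minima
    set g : ℕ → F → ℝ :=
      fun n => Nat.rec (motive := fun _ => F → ℝ) (⇑(f 0))
        (fun m gm => fun x => min (gm x) (f (m + 1) x)) n with hgdef
    have hgsucc : ∀ n, g (n + 1) = fun x => min (g n x) (f (n + 1) x) := fun n => rfl
    have hg0 : g 0 = ⇑(f 0) := rfl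
    have hgcont : ∀ n, Continuous (g n) := by
      intro n
      induction n with
      | zero => exact (f 0).continuous
      | succ m ih => rw [hgsucc]; exact ih.min (f (m + 1)).continuous
    have hg01 : ∀ n x, g n x ∈ Icc (0 : ℝ) 1 := by
      intro n
      induction n with
      | zero => exact fun x => hf01 0 x
      | succ m ih =>
        intro x
        rw [hgsucc]
        exact ⟨le_min (ih x).1 (hf01 (m + 1) x).1, le_trans (min_le_left _ _) (ih x).2⟩
    have hgK : ∀ n, ∀ x ∈ K', g n x = 1 := by
      intro n
      induction n with
      | zero => exact fun x hx => hf1 0 hx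
      | succ m ih =>
        intro x hx
        rw [hgsucc]
        dsimp only
        rw [ih x hx, hf1 (m + 1) hx]
        simp
    have hgle : ∀ n x, g n x ≤ f n x := by
      intro n
      induction n with
      | zero => exact fun x => le_rfl
      | succ m _ => exact fun x => min_le_right _ _
    have hganti : ∀ x, Antitone fun n => g n x := by
      intro x
      apply antitone_nat_of_succ_le
      intro n
      rw [hgsucc]
      exact min_le_left _ _
    have hgsupp : ∀ n, HasCompactSupport (g n) := by
      intro n
      apply (hfc 0).mono
      intro x hx
      simp only [Function.mem_support] at hx ⊢
      intro h0
      apply hx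
      have h1 : g n x ≤ g 0 x := hganti x (Nat.zero_le n)
      rw [hg0] at h1
      rw [h0] at h1
      exact le_antisymm h1 (hg01 n x).1
    have hbdd : ∀ x, BddBelow (range fun n => g n x) := by
      intro x
      refine ⟨0, ?_⟩
      rintro y ⟨n, rfl⟩
      exact (hg01 n x).1
    set w : F → ℝ := fun x => ⨅ n, g n x with hw
    have hglim : ∀ x, Tendsto (fun n => g n x) atTop (𝓝 (w x)) := fun x =>
      tendsto_atTop_ciInf (hganti x) (hbdd x)
    have hwmeas : Measurable w :=
      measurable_of_tendsto_metrizable (fun n => (hgcont n).measurable)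
        (tendsto_pi_nhds.mpr hglim)
    have hw0 : ∀ x, 0 ≤ w x := fun x => le_ciInf fun n => (hg01 n x).1
    have hw1 : ∀ x, w x ≤ 1 := fun x => le_trans (ciInf_le (hbdd x) 0) (hg01 0 x).2
    have hwnull : ∀ᵐ x ∂ν, w x = 0 := by
      have hle : ∀ n : ℕ, ∫⁻ x, ENNReal.ofReal (w x) ∂ν ≤ ((n : ℝ≥0∞) + 1)⁻¹ := by
        intro n
        calc ∫⁻ x, ENNReal.ofReal (w x) ∂ν
            ≤ ∫⁻ x, (V n).indicator (fun _ => 1) x ∂ν := by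
              apply lintegral_mono
              intro x
              by_cases hx : x ∈ V n
              · rw [indicator_of_mem hx]
                exact ENNReal.ofReal_le_one.mpr (hw1 x)
              · rw [indicator_of_notMem hx]
                have hfx : f n x = 0 := hf0 n hx
                have : w x ≤ 0 := le_trans (ciInf_le (hbdd x) n) (by rw [← hfx]; exact hgle n x)
                simp [ENNReal.ofReal_eq_zero.mpr this]
          _ = ν (V n) := lintegral_indicator_one (hVo n).measurableSet
          _ ≤ ((n : ℝ≥0∞) + 1)⁻¹ := (hVs n).le
      have hzero : ∫⁻ x, ENNReal.ofReal (w x) ∂ν = 0 := by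
        by_contra hne
        obtain ⟨n, hn⟩ := ENNReal.exists_inv_nat_lt hne
        have h1 : ((n : ℝ≥0∞) + 1)⁻¹ ≤ ((n : ℝ≥0∞))⁻¹ :=
          ENNReal.inv_le_inv' (le_add_of_nonneg_right (by simp))
        exact absurd (lt_of_lt_of_le hn ((hle n).trans h1)) (lt_irrefl _)
      have := (lintegral_eq_zero_iff (hwmeas.ennreal_ofReal)).mp hzero
      filter_upwards [this] with x hx
      have : ENNReal.ofReal (w x) = 0 := hx
      rw [ENNReal.ofReal_eq_zero] at this
      exact le_antisymm this (hw0 x)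
    -- C₀ functions and the weak* limit
    set Gc : ℕ → C₀(F, ℂ) := fun n =>
      ⟨⟨fun x => ((g n x : ℝ) : ℂ), Complex.continuous_ofReal.comp (hgcont n)⟩,
        ((hgsupp n).comp_left (g := fun r : ℝ => ((r : ℝ) : ℂ)) Complex.ofReal_zero).is_zero_at_infty⟩
      with hGc
    have hGcoe : ∀ n, ⇑(Gc n) = fun x => ((g n x : ℝ) : ℂ) := fun n => rfl
    have hGmem : ∀ n, MemLp (⇑(Gc n)) ⊤ ν := by
      intro n
      apply memLp_top_of_bound (((Complex.continuous_ofReal.comp (hgcont n))).aestronglyMeasurable) 1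
      apply ae_of_all
      intro x
      show ‖((g n x : ℝ) : ℂ)‖ ≤ 1
      rw [Complex.norm_real, Real.norm_eq_abs, abs_of_nonneg (hg01 n x).1]
      exact (hg01 n x).2
    have hΦG : ∀ n, ⇑(Φ ((hGmem n).toLp ⇑(Gc n))) =ᵐ[μ]
        Y.indicator (fun t => ((g n (β t) : ℝ) : ℂ)) := fun n =>
      (hC0 (Gc n) (hGmem n)).trans (hind (fun y => ((g n y : ℝ) : ℂ)))
    have h1 : ∀ h : Lp ℂ 1 ν,
        Tendsto (fun n => ∫ x, (((hGmem n).toLp ⇑(Gc n)) : F → ℂ) x * (h : F → ℂ) x ∂ν) atTop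
          (𝓝 (∫ x, ((0 : Lp ℂ ⊤ ν) : F → ℂ) x * (h : F → ℂ) x ∂ν)) := by
      intro h
      have base := dct_mul (fun n x => ((g n x : ℝ) : ℂ)) (fun x => ((w x : ℝ) : ℂ)) 1
        (fun n => (Complex.continuous_ofReal.comp (hgcont n)).aestronglyMeasurable)
        (fun n => ae_of_all _ fun x => by
          simp only [Complex.norm_real, Real.norm_eq_abs]
          rw [abs_of_nonneg (hg01 n x).1]; exact (hg01 n x).2)
        (ae_of_all _ fun x => (Complex.continuous_ofReal.tendsto (w x)).comp (hglim x)) h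
      have e2 : ∫ x, ((w x : ℝ) : ℂ) * (h : F → ℂ) x ∂ν
          = ∫ x, ((0 : Lp ℂ ⊤ ν) : F → ℂ) x * (h : F → ℂ) x ∂ν := by
        apply integral_congr_ae
        filter_upwards [hwnull, Lp.coeFn_zero ℂ ⊤ ν] with x hx1 hx2
        rw [hx1, hx2]
        simp
      rw [e2] at base
      apply base.congr
      intro n
      apply integral_congr_ae
      filter_upwards [(hGmem n).coeFn_toLp] with x hx
      rw [hx, hGcoe]
    have h2 := seq_cont μ ν Φ hcont _ 0 h1
    -- test against indicators of the exhaustion of G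
    apply hcover
    intro m
    have hμK : μ (K m) < ∞ := (K.isCompact m).measure_lt_top
    have hkmem : MemLp ((K m : Set G).indicator (fun _ => (1 : ℂ))) 1 μ := by
      rw [memLp_one_iff_integrable, integrable_indicator_iff (K.isCompact m).measurableSet]
      exact Measure.integrableOn_of_bounded (M := 1) hμK.ne aestronglyMeasurable_const
        (ae_of_all _ fun x => by simp)
    set k := hkmem.toLp _ with hk
    have hten := h2 k
    have hlim0 : ∫ x, ((Φ (0 : Lp ℂ ⊤ ν)) : G → ℂ) x * (k : G → ℂ) x ∂μ = 0 := by
      rw [map_zero]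
      rw [integral_congr_ae (show (fun x => ((0 : Lp ℂ ⊤ μ) : G → ℂ) x * (k : G → ℂ) x)
          =ᵐ[μ] (fun _ => (0 : ℂ)) from by
        filter_upwards [Lp.coeFn_zero ℂ ⊤ μ] with x hx
        rw [hx]; simp)]
      simp
    set p : ℕ → G → ℝ := fun n => (Y ∩ K m).indicator (fun t => g n (β t)) with hp
    have hterm : ∀ n, ∫ x, (Φ ((hGmem n).toLp ⇑(Gc n)) : G → ℂ) x * (k : G → ℂ) x ∂μ
        = ((∫ t, p n t ∂μ : ℝ) : ℂ) := by
      intro n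
      rw [integral_congr_ae (show (fun x => (Φ ((hGmem n).toLp ⇑(Gc n)) : G → ℂ) x * (k : G → ℂ) x) =ᵐ[μ] fun t => Y.indicator (fun t => ((g n (β t) : ℝ) : ℂ)) t * (K m : Set G).indicator (fun _ => (1 : ℂ)) t from EventuallyEq.mul (hΦG n) hkmem.coeFn_toLp)]
      have heq : (fun t => Y.indicator (fun t => ((g n (β t) : ℝ) : ℂ)) t *
          (K m : Set G).indicator (fun _ => (1 : ℂ)) t) = fun t => ((p n t : ℝ) : ℂ) := by
        funext t
        by_cases h1 : t ∈ Y <;> by_cases h2 : t ∈ K m <;>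
          simp [hp, indicator, h1, h2]
      rw [heq]
      exact integral_ofReal
    have hrlow : ∀ n, (μ (Y ∩ K m ∩ β ⁻¹' K')).toReal ≤ ∫ t, p n t ∂μ := by
      intro n
      have hYKm : MeasurableSet (Y ∩ K m : Set G) := hYm.inter (K.isCompact m).measurableSet
      have hpmeas : Measurable (p n) := (((hgcont n).measurable).comp hβ).indicator hYKm
      have hmble : AEStronglyMeasurable (fun t => g n (β t)) μ :=
        ((hgcont n).measurable.comp hβ).aestronglyMeasurable
      have hpint : Integrable (p n) μ := by
        rw [hp]
        rw [integrable_indicator_iff hYKm]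
        apply Measure.integrableOn_of_bounded (M := 1)
          ((measure_mono inter_subset_right).trans_lt hμK).ne hmble
        apply ae_of_all
        intro x
        rw [Real.norm_eq_abs, abs_of_nonneg (hg01 n (β x)).1]
        exact (hg01 n (β x)).2
      have hSm : MeasurableSet (Y ∩ K m ∩ β ⁻¹' K') := hYKm.inter (hβ hK'.measurableSet)
      have hqint : Integrable ((Y ∩ K m ∩ β ⁻¹' K').indicator (1 : G → ℝ)) μ := by
        rw [integrable_indicator_iff hSm]
        exact Measure.integrableOn_of_bounded (M := 1)
          ((measure_mono (inter_subset_left.trans inter_subset_right)).trans_lt hμK).ne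
          aestronglyMeasurable_const (ae_of_all _ fun x => by simp)
      have hmono : ∀ t, (Y ∩ K m ∩ β ⁻¹' K').indicator (1 : G → ℝ) t ≤ p n t := by
        intro t
        by_cases ht : t ∈ Y ∩ K m ∩ β ⁻¹' K'
        · rw [indicator_of_mem ht, hp]
          dsimp only
          rw [indicator_of_mem ht.1, hgK n _ ht.2]
          simp
        · rw [indicator_of_notMem ht]
          by_cases ht2 : t ∈ Y ∩ K m
          · rw [hp]; dsimp only; rw [indicator_of_mem ht2]; exact (hg01 n _).1
          · rw [hp]; dsimp only; rw [indicator_of_notMem ht2]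
      have := integral_mono hqint hpint hmono
      rwa [integral_indicator_one hSm] at this
    have htR : Tendsto (fun n => ∫ t, p n t ∂μ) atTop (𝓝 0) := by
      have hC' : Tendsto (fun n => ((∫ t, p n t ∂μ : ℝ) : ℂ)) atTop (𝓝 0) := by
        have := hten.congr hterm
        rwa [hlim0] at this
      have := (Complex.continuous_re.tendsto 0).comp hC'
      simpa [Function.comp_def] using this
    have h0' : (μ (Y ∩ K m ∩ β ⁻¹' K')).toReal ≤ 0 := ge_of_tendsto' htR hrlow
    have hfin : μ (Y ∩ K m ∩ β ⁻¹' K') ≠ ∞ :=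
      ((measure_mono (inter_subset_left.trans inter_subset_right)).trans_lt hμK).ne
    have hR0 : (μ (Y ∩ K m ∩ β ⁻¹' K')).toReal = 0 := le_antisymm h0' ENNReal.toReal_nonneg
    have : μ (Y ∩ K m ∩ β ⁻¹' K') = 0 := by
      rcases (ENNReal.toReal_eq_zero_iff _).mp hR0 with h | h
      · exact h
      · exact absurd h hfin
    rw [show Y ∩ β ⁻¹' K' ∩ K m = Y ∩ K m ∩ β ⁻¹' K' by ext x; constructor <;>
      (rintro ⟨⟨hx1, hx2⟩, hx3⟩; exact ⟨⟨hx1, hx3⟩, hx2⟩)]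
    exact this
  -- Step 2: absolute continuity at the level of β
  have hb : ∀ E : Set F, MeasurableSet E → ν E = 0 → μ (Y ∩ β ⁻¹' E) = 0 := by
    intro E hE hνE
    have hNnull : μ ({t | α t ≠ β t} ∩ Y) = 0 := by
      have h1 := hαβ
      rw [EventuallyEq, ae_iff] at h1
      rwa [Measure.restrict_apply' hYm] at h1
    obtain ⟨N', hNN', hN'm, hN'0⟩ := exists_measurable_superset_of_null hNnull
    apply hcover
    intro m
    set A := Y ∩ β ⁻¹' E ∩ K m with hA
    have hAm : MeasurableSet A := (hYm.inter (hβ hE)).inter (K.isCompact m).measurableSet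
    have hAfin : μ A ≠ ∞ :=
      ((measure_mono inter_subset_right).trans_lt (K.isCompact m).measure_lt_top).ne
    have key : ∀ L, L ⊆ A → IsCompact L → μ L = 0 := by
      intro L hLA hLc
      have hL'm : MeasurableSet (L \ N') := hLc.measurableSet.diff hN'm
      have hL'fin : μ (L \ N') ≠ ∞ :=
        ((measure_mono diff_subset).trans_lt hLc.measure_lt_top).ne
      have key2 : ∀ L₂, L₂ ⊆ L \ N' → IsCompact L₂ → μ L₂ = 0 := by
        intro L₂ hL₂ hL₂c
        have hL₂Y : L₂ ⊆ Y := fun x hx => (hLA (hL₂ hx).1).1.1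
        have hαβL₂ : ∀ x ∈ L₂, α x = β x := by
          intro x hx
          by_contra hne
          exact (hL₂ hx).2 (hNN' ⟨hne, hL₂Y hx⟩)
        set K'' := α '' L₂ with hK''
        have hK''c : IsCompact K'' := hL₂c.image_of_continuousOn (hα.mono hL₂Y)
        have hK''E : K'' ⊆ E := by
          rintro _ ⟨x, hx, rfl⟩
          rw [hαβL₂ x hx]
          exact (hLA (hL₂ hx).1).1.2
        have hνK'' : ν K'' = 0 := measure_mono_null hK''E hνE
        apply measure_mono_null _ (UR K'' hK''c hνK'')
        intro x hx
        refine ⟨hL₂Y hx, ?_⟩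
        show β x ∈ K''
        rw [← hαβL₂ x hx]
        exact mem_image_of_mem α hx
      have hz : μ (L \ N') = 0 := by
        by_contra hne
        obtain ⟨L₂, hsub, hcomp, hlt⟩ := hL'm.exists_isCompact_lt_add hL'fin (ε := μ (L \ N')) hne
        rw [key2 L₂ hsub hcomp, zero_add] at hlt
        exact lt_irrefl _ hlt
      apply le_antisymm _ (by simp)
      calc μ L ≤ μ ((L \ N') ∪ N') := measure_mono (fun x hx => by
            by_cases hxN : x ∈ N'
            · exact Or.inr hxN
            · exact Or.inl ⟨hx, hxN⟩)
        _ ≤ μ (L \ N') + μ N' := measure_union_le _ _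
        _ = 0 := by rw [hz, hN'0, add_zero]
    by_contra hne
    obtain ⟨L, hsub, hcomp, hlt⟩ := hAm.exists_isCompact_lt_add hAfin (ε := μ A) hne
    rw [key L hsub hcomp, zero_add] at hlt
    exact lt_irrefl _ hlt
  -- Step 3: part (a) for bounded measurable functions
  have parta : ∀ (u : F → ℂ), Measurable u → (∃ C, ∀ x, ‖u x‖ ≤ C) → ∀ (hu : MemLp u ⊤ ν),
      ⇑(Φ (hu.toLp u)) =ᵐ[μ] Y.indicator (fun t => u (α t)) := by
    intro u hum hCex hu
    obtain ⟨C, hC⟩ := hCex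
    have hCnn : (0:ℝ) ≤ C := le_trans (norm_nonneg _) (hC 1)
    -- the truncation map θ
    set θ : ℂ → ℂ := fun z => ((min 1 (C / ‖z‖) : ℝ) : ℂ) * z with hθ
    have hθ0 : θ 0 = 0 := mul_zero _
    have hmin0 : ∀ z : ℂ, 0 ≤ min 1 (C / ‖z‖) := fun z =>
      le_min zero_le_one (div_nonneg hCnn (norm_nonneg z))
    have hθnorm : ∀ z, ‖θ z‖ = min 1 (C / ‖z‖) * ‖z‖ := by
      intro z
      rw [hθ]
      dsimp only
      rw [norm_mul, Complex.norm_real, Real.norm_eq_abs, abs_of_nonneg (hmin0 z)]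
    have hθle : ∀ z : ℂ, ‖θ z‖ ≤ ‖z‖ := by
      intro z
      rw [hθnorm]
      calc min 1 (C / ‖z‖) * ‖z‖ ≤ 1 * ‖z‖ :=
            mul_le_mul_of_nonneg_right (min_le_left _ _) (norm_nonneg z)
        _ = ‖z‖ := one_mul _
    have hθcont : Continuous θ := by
      rw [continuous_iff_continuousAt]
      intro z
      by_cases hz : z = 0
      · subst hz
        unfold ContinuousAt
        rw [hθ0]
        exact squeeze_zero_norm hθle (continuous_norm.tendsto' 0 0 norm_zero)
      · apply ContinuousAt.mul _ continuousAt_id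
        apply Complex.continuous_ofReal.continuousAt.comp
        exact continuousAt_const.min
          (continuousAt_const.div continuous_norm.continuousAt (norm_ne_zero_iff.mpr hz))
    have hθfix : ∀ z, ‖z‖ ≤ C → θ z = z := by
      intro z hz
      by_cases h : z = 0
      · rw [h, hθ0]
      · have h1 : (1:ℝ) ≤ C / ‖z‖ := (one_le_div (norm_pos_iff.mpr h)).mpr hz
        rw [hθ]
        dsimp only
        rw [min_eq_left h1]
        simp
    have hθbnd : ∀ z, ‖θ z‖ ≤ C := by
      intro z
      rcases le_or_gt ‖z‖ C with h | h
      · exact (hθle z).trans h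
      · have hzne : z ≠ 0 := by
          intro h0
          rw [h0, norm_zero] at h
          exact absurd h (not_lt.mpr hCnn)
        rw [hθnorm]
        calc min 1 (C / ‖z‖) * ‖z‖ ≤ (C / ‖z‖) * ‖z‖ :=
              mul_le_mul_of_nonneg_right (min_le_right _ _) (norm_nonneg z)
          _ = C := div_mul_cancel₀ C (norm_ne_zero_iff.mpr hzne)
    -- compactly supported continuous approximants
    set KF : CompactExhaustion F := CompactExhaustion.choice F with hKF
    have happrox : ∀ m : ℕ, ∃ g : F → ℂ, HasCompactSupport g ∧
        (∫⁻ x, ‖(KF m : Set F).indicator u x - g x‖₊ ∂ν) ≤ (2⁻¹ : ℝ≥0∞) ^ m ∧ Continuous g := by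
      intro m
      have hint : Integrable ((KF m : Set F).indicator u) ν := by
        rw [integrable_indicator_iff (KF.isCompact m).measurableSet]
        exact Measure.integrableOn_of_bounded (KF.isCompact m).measure_lt_top.ne
          hum.aestronglyMeasurable (ae_of_all _ fun x => hC x)
      obtain ⟨g, h1, h2, h3, _⟩ := hint.exists_hasCompactSupport_lintegral_sub_le
        (ε := (2⁻¹ : ℝ≥0∞) ^ m) (by
          apply pow_ne_zero
          simp)
      exact ⟨g, h1, h2, h3⟩
    choose g₀ hg₀s hg₀l hg₀c using happrox
    have haconv : ∀ᵐ x ∂ν, Tendsto (fun m => g₀ m x) atTop (𝓝 (u x)) := by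
      have hmeas : ∀ m, Measurable fun x => (‖(KF m : Set F).indicator u x - g₀ m x‖₊ : ℝ≥0∞) :=
        fun m => (((hum.indicator (KF.isCompact m).measurableSet).sub
          (hg₀c m).measurable).nnnorm).coe_nnreal_ennreal
      have hsum : ∫⁻ x, ∑' m, (‖(KF m : Set F).indicator u x - g₀ m x‖₊ : ℝ≥0∞) ∂ν ≠ ∞ := by
        rw [lintegral_tsum (fun m => (hmeas m).aemeasurable)]
        apply ne_top_of_le_ne_top _ (ENNReal.tsum_le_tsum hg₀l)
        rw [ENNReal.tsum_geometric]
        simp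
      have hfin := ae_lt_top (Measurable.ennreal_tsum hmeas) hsum
      filter_upwards [hfin] with x hx
      have hterm0 : Tendsto (fun m => (‖(KF m : Set F).indicator u x - g₀ m x‖₊ : ℝ≥0∞))
          atTop (𝓝 0) := ENNReal.tendsto_atTop_zero_of_tsum_ne_top hx.ne
      have h1' : Tendsto (fun m => (‖(KF m : Set F).indicator u x - g₀ m x‖₊ : ℝ≥0))
          atTop (𝓝 0) := by
        rw [← ENNReal.coe_zero] at hterm0
        exact ENNReal.tendsto_coe.mp hterm0
      have hterm' : Tendsto (fun m => (KF m : Set F).indicator u x - g₀ m x) atTop (𝓝 0) := by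
        apply tendsto_zero_iff_norm_tendsto_zero.mpr
        have h2' := (NNReal.continuous_coe.tendsto 0).comp h1'
        simpa [Function.comp_def] using h2'
      have hxin : Tendsto (fun m => (KF m : Set F).indicator u x) atTop (𝓝 (u x)) := by
        obtain ⟨m₀, hm₀⟩ := KF.exists_mem x
        have hev : (fun _ : ℕ => u x) =ᶠ[atTop] (fun m => (KF m : Set F).indicator u x) := by
          filter_upwards [eventually_ge_atTop m₀] with m hm
          rw [indicator_of_mem (KF.subset hm hm₀)]
        exact Tendsto.congr' hev tendsto_const_nhds
      have hfin2 := hxin.sub hterm'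
      simpa using hfin2
    -- truncated approximants
    set gg : ℕ → F → ℂ := fun m => fun x => θ (g₀ m x) with hgg
    have hggc : ∀ m, Continuous (gg m) := fun m => hθcont.comp (hg₀c m)
    have hggs : ∀ m, HasCompactSupport (gg m) := fun m => (hg₀s m).comp_left hθ0
    have hggb : ∀ m x, ‖gg m x‖ ≤ C := fun m x => hθbnd _
    have hggconv : ∀ᵐ x ∂ν, Tendsto (fun m => gg m x) atTop (𝓝 (u x)) := by
      filter_upwards [haconv] with x hx
      have h1 := (hθcont.tendsto (u x)).comp hx
      rw [hθfix (u x) (hC x)] at h1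
      exact h1
    set Gc : ℕ → C₀(F, ℂ) := fun m => ⟨⟨gg m, hggc m⟩, (hggs m).is_zero_at_infty⟩ with hGc
    have hGmem : ∀ m, MemLp (⇑(Gc m)) ⊤ ν := fun m =>
      memLp_top_of_bound (hggc m).aestronglyMeasurable C (ae_of_all _ (hggb m))
    have hΦG : ∀ m, ⇑(Φ ((hGmem m).toLp ⇑(Gc m))) =ᵐ[μ] Y.indicator (fun t => gg m (β t)) :=
      fun m => (hC0 (Gc m) (hGmem m)).trans (hind (gg m))
    -- weak* convergence in L^∞(ν)
    have h1 : ∀ h : Lp ℂ 1 ν,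
        Tendsto (fun m => ∫ x, (((hGmem m).toLp ⇑(Gc m)) : F → ℂ) x * (h : F → ℂ) x ∂ν) atTop
          (𝓝 (∫ x, ((hu.toLp u : Lp ℂ ⊤ ν) : F → ℂ) x * (h : F → ℂ) x ∂ν)) := by
      intro h
      have base := dct_mul gg u C (fun m => (hggc m).aestronglyMeasurable)
        (fun m => ae_of_all _ (hggb m)) hggconv h
      have e2 : ∫ x, u x * (h : F → ℂ) x ∂ν
          = ∫ x, ((hu.toLp u : Lp ℂ ⊤ ν) : F → ℂ) x * (h : F → ℂ) x ∂ν := by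
        apply integral_congr_ae
        filter_upwards [hu.coeFn_toLp] with x hx
        rw [hx]
      rw [e2] at base
      apply base.congr
      intro m
      apply integral_congr_ae
      filter_upwards [(hGmem m).coeFn_toLp] with x hx
      rw [hx]
      rfl
    have h2 := seq_cont μ ν Φ hcont _ (hu.toLp u) h1
    -- convergence on the G side
    have hA : ∃ A' : Set F, MeasurableSet A' ∧ ν A' = 0 ∧
        ∀ x, x ∉ A' → Tendsto (fun m => gg m x) atTop (𝓝 (u x)) := by
      have h0 : ν {x | ¬ Tendsto (fun m => gg m x) atTop (𝓝 (u x))} = 0 := ae_iff.mp hggconv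
      obtain ⟨A', hsub, hm', h0'⟩ := exists_measurable_superset_of_null h0
      exact ⟨A', hm', h0', fun x hx => not_not.mp (fun hcon => hx (hsub hcon))⟩
    obtain ⟨A', hA'm, hA'0, hA'conv⟩ := hA
    have hbA : μ (Y ∩ β ⁻¹' A') = 0 := hb A' hA'm hA'0
    have hYconv : ∀ᵐ t ∂μ, Tendsto (fun m => Y.indicator (fun t => gg m (β t)) t) atTop
        (𝓝 (Y.indicator (fun t => u (β t)) t)) := by
      have hae : ∀ᵐ t ∂μ, t ∉ Y ∩ β ⁻¹' A' := measure_eq_zero_iff_ae_notMem.mp hbA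
      filter_upwards [hae] with t ht
      by_cases htY : t ∈ Y
      · have hβt : β t ∉ A' := fun hmem => ht ⟨htY, hmem⟩
        simp only [indicator_of_mem htY]
        exact hA'conv _ hβt
      · simp only [indicator_of_notMem htY]
        exact tendsto_const_nhds
    have h3 : ∀ k : Lp ℂ 1 μ,
        Tendsto (fun m => ∫ x, (Φ ((hGmem m).toLp ⇑(Gc m)) : G → ℂ) x * (k : G → ℂ) x ∂μ) atTop
          (𝓝 (∫ x, Y.indicator (fun t => u (β t)) x * (k : G → ℂ) x ∂μ)) := by
      intro k
      have hindb : ∀ m, ∀ᵐ x ∂μ, ‖Y.indicator (fun t => gg m (β t)) x‖ ≤ C := by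
        intro m
        apply ae_of_all
        intro x
        by_cases hx : x ∈ Y
        · rw [indicator_of_mem hx]; exact hggb m _
        · rw [indicator_of_notMem hx, norm_zero]; exact hCnn
      have hindm : ∀ m, AEStronglyMeasurable (Y.indicator (fun t => gg m (β t))) μ :=
        fun m => (((hggc m).measurable.comp hβ).indicator hYm).aestronglyMeasurable
      have base := dct_mul (fun m => Y.indicator (fun t => gg m (β t)))
        (Y.indicator (fun t => u (β t))) C hindm hindb hYconv k
      apply base.congr
      intro m
      exact integral_congr_ae (EventuallyEq.mul (hΦG m).symm (EventuallyEq.refl _ _))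
    have hEq : ∀ k : Lp ℂ 1 μ, ∫ x, (Φ (hu.toLp u) : G → ℂ) x * (k : G → ℂ) x ∂μ
        = ∫ x, Y.indicator (fun t => u (β t)) x * (k : G → ℂ) x ∂μ :=
      fun k => tendsto_nhds_unique (h2 k) (h3 k)
    -- separation
    set D := max C ((eLpNormEssSup (⇑(Φ (hu.toLp u))) μ).toReal) with hDdef
    have hΦb : ∀ᵐ x ∂μ, ‖(Φ (hu.toLp u) : G → ℂ) x‖ ≤ D := by
      have hDne : eLpNormEssSup (⇑(Φ (hu.toLp u))) μ ≠ ∞ := by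
        have h1' := Lp.eLpNorm_ne_top (Φ (hu.toLp u))
        rwa [eLpNorm_exponent_top] at h1'
      filter_upwards [ae_le_eLpNormEssSup (f := ((Φ (hu.toLp u)) : G → ℂ)) (μ := μ)] with x hx
      have h2' := ENNReal.toReal_mono hDne hx
      rw [toReal_enorm] at h2'
      exact le_max_of_le_right h2'
    have hindb2 : ∀ᵐ x ∂μ, ‖Y.indicator (fun t => u (β t)) x‖ ≤ D := by
      apply ae_of_all
      intro x
      by_cases hx : x ∈ Y
      · rw [indicator_of_mem hx]; exact le_max_of_le_left (hC _)
      · rw [indicator_of_notMem hx, norm_zero]; exact le_max_of_le_left hCnn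
    have hfinal := sep (Lp.aestronglyMeasurable _)
      (((hum.comp hβ).indicator hYm).aestronglyMeasurable) hΦb hindb2 hEq
    exact hfinal.trans (hind u).symm
  -- bounded measurable representatives of L^∞ classes
  have rep : ∀ u : Lp ℂ ⊤ ν, ∃ u' : F → ℂ, ∃ hm : Measurable u', ∃ C : ℝ,
      (∀ x, ‖u' x‖ ≤ C) ∧ u' =ᵐ[ν] ⇑u ∧ ∃ hmem : MemLp u' ⊤ ν, hmem.toLp u' = u := by
    intro u
    have hf0 : AEStronglyMeasurable (⇑u) ν := Lp.aestronglyMeasurable u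
    set D := (eLpNormEssSup (⇑u) ν).toReal with hD
    have hDne : eLpNormEssSup (⇑u) ν ≠ ∞ := by
      have h1 := Lp.eLpNorm_ne_top u
      rwa [eLpNorm_exponent_top] at h1
    have hbd : ∀ᵐ x ∂ν, ‖(u : F → ℂ) x‖ ≤ D := by
      filter_upwards [ae_le_eLpNormEssSup (f := (u : F → ℂ)) (μ := ν)] with x hx
      have h2 := ENNReal.toReal_mono hDne hx
      rwa [toReal_enorm] at h2
    set f1 := hf0.aemeasurable.mk ⇑u with hf1
    have hf1m : Measurable f1 := hf0.aemeasurable.measurable_mk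
    have hf1e : ⇑u =ᵐ[ν] f1 := hf0.aemeasurable.ae_eq_mk
    set u' : F → ℂ := fun x => if ‖f1 x‖ ≤ D then f1 x else 0 with hu'
    have hu'm : Measurable u' :=
      Measurable.ite (measurableSet_le hf1m.norm measurable_const) hf1m measurable_const
    have hu'b : ∀ x, ‖u' x‖ ≤ max D 0 := by
      intro x
      rw [hu']
      dsimp only
      by_cases hx : ‖f1 x‖ ≤ D
      · rw [if_pos hx]; exact le_max_of_le_left hx
      · rw [if_neg hx]; simp
    have hu'e : u' =ᵐ[ν] ⇑u := by
      filter_upwards [hbd, hf1e] with x h1 h2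
      rw [hu']
      dsimp only
      rw [← h2] at *
      rw [if_pos h1]
    have hmem : MemLp u' ⊤ ν :=
      memLp_top_of_bound hu'm.aestronglyMeasurable _ (ae_of_all _ hu'b)
    exact ⟨u', hu'm, max D 0, hu'b, hu'e, hmem, Lp.ext (hmem.coeFn_toLp.trans hu'e)⟩
  refine ⟨parta, ?_, ?_, ?_⟩
  · -- multiplicativity
    intro u v w hw
    obtain ⟨u', hu'm, Cu, hu'b, hu'e, hu'mem, hu'eq⟩ := rep u
    obtain ⟨v', hv'm, Cv, hv'b, hv'e, hv'mem, hv'eq⟩ := rep v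
    have hCu0 : 0 ≤ Cu := le_trans (norm_nonneg _) (hu'b 1)
    set w' : F → ℂ := fun x => u' x * v' x with hw'
    have hw'm : Measurable w' := hu'm.mul hv'm
    have hw'b : ∀ x, ‖w' x‖ ≤ Cu * Cv := fun x => by
      rw [hw']; dsimp only; rw [norm_mul]
      exact mul_le_mul (hu'b x) (hv'b x) (norm_nonneg _) hCu0
    have hw'mem : MemLp w' ⊤ ν := memLp_top_of_bound hw'm.aestronglyMeasurable _ (ae_of_all _ hw'b)
    have hw'eq : hw'mem.toLp w' = w := by
      apply Lp.ext
      apply hw'mem.coeFn_toLp.trans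
      apply EventuallyEq.trans _ hw.symm
      filter_upwards [hu'e, hv'e] with x h1 h2
      rw [hw']; dsimp only; rw [h1, h2]
    have h1 := parta w' hw'm ⟨_, hw'b⟩ hw'mem
    rw [hw'eq] at h1
    have h2 := parta u' hu'm ⟨Cu, hu'b⟩ hu'mem
    rw [hu'eq] at h2
    have h3 := parta v' hv'm ⟨Cv, hv'b⟩ hv'mem
    rw [hv'eq] at h3
    filter_upwards [h1, h2, h3] with t ht1 ht2 ht3
    rw [ht1, ht2, ht3]
    by_cases htY : t ∈ Y
    · rw [indicator_of_mem htY, indicator_of_mem htY, indicator_of_mem htY]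
    · rw [indicator_of_notMem htY, indicator_of_notMem htY, indicator_of_notMem htY, mul_zero]
  · -- star
    intro u w hw
    obtain ⟨u', hu'm, Cu, hu'b, hu'e, hu'mem, hu'eq⟩ := rep u
    set w' : F → ℂ := fun x => star (u' x) with hw'
    have hw'm : Measurable w' := continuous_star.measurable.comp hu'm
    have hw'b : ∀ x, ‖w' x‖ ≤ Cu := fun x => by
      rw [hw']; dsimp only; rw [norm_star]; exact hu'b x
    have hw'mem : MemLp w' ⊤ ν := memLp_top_of_bound hw'm.aestronglyMeasurable _ (ae_of_all _ hw'b)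
    have hw'eq : hw'mem.toLp w' = w := by
      apply Lp.ext
      apply hw'mem.coeFn_toLp.trans
      apply EventuallyEq.trans _ hw.symm
      filter_upwards [hu'e] with x h1
      rw [hw']; dsimp only; rw [h1]
    have h1 := parta w' hw'm ⟨_, hw'b⟩ hw'mem
    rw [hw'eq] at h1
    have h2 := parta u' hu'm ⟨Cu, hu'b⟩ hu'mem
    rw [hu'eq] at h2
    filter_upwards [h1, h2] with t ht1 ht2
    rw [ht1, ht2]
    by_cases htY : t ∈ Y
    · rw [indicator_of_mem htY, indicator_of_mem htY]
    · rw [indicator_of_notMem htY, indicator_of_notMem htY, star_zero]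
  · -- absolute continuity
    have hmapeq : Measure.map α (μ.restrict Y) = Measure.map β (μ.restrict Y) :=
      Measure.map_congr hαβ
    intro s hs
    obtain ⟨s', hss', hs'm, hs'0⟩ := exists_measurable_superset_of_null hs
    rw [hmapeq]
    apply measure_mono_null hss'
    rw [Measure.map_apply hβ hs'm, Measure.restrict_apply (hβ hs'm)]
    rw [inter_comm]
    exact hb s' hs'm hs'0
end

section
/- Let G and F be locally compact, second countable Hausdorff topological groups with left Haar measures μ (on G) and ν (on F), and let θ: G → F be a continuous group homomorphism. Then the pushforward measure θ_*μ is absolutely continuous with respect to ν if and only if the image θ(G) is an open subgroup of F. -/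
open MeasureTheory Set
open scoped Pointwise

/-- Theorem 2.3 (from [AEK]): for a continuous homomorphism `θ : G → F` between locally
compact second countable groups with Haar measures `μ`, `ν`, the pushforward `θ_*μ` is
absolutely continuous with respect to `ν` iff `θ(G)` is an open subgroup of `F`. -/
theorem stmt2
    {G F : Type*} [Group G] [TopologicalSpace G] [IsTopologicalGroup G]
    [LocallyCompactSpace G] [SecondCountableTopology G] [T2Space G]
    [MeasurableSpace G] [BorelSpace G]
    [Group F] [TopologicalSpace F] [IsTopologicalGroup F]
    [LocallyCompactSpace F] [SecondCountableTopology F] [T2Space F]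
    [MeasurableSpace F] [BorelSpace F]
    (μ : Measure G) [μ.IsHaarMeasure] (ν : Measure F) [ν.IsHaarMeasure]
    (θ : G →* F) (hθ : Continuous θ) :
    Measure.map θ μ ≪ ν ↔ IsOpen (Set.range θ) := by
  have hθm : Measurable (θ : G → F) := hθ.measurable
  have hrmeas : MeasurableSet (Set.range (θ : G → F)) := by
    have hr : Set.range (θ : G → F) = ⋃ n, θ '' compactCovering G n := by
      rw [← Set.image_univ, ← iUnion_compactCovering G, Set.image_iUnion]
    rw [hr]
    exact MeasurableSet.iUnion fun n =>
      ((isCompact_compactCovering G n).image hθ).measurableSet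
  constructor
  · intro habs
    -- range θ has positive measure
    have hpos : 0 < ν (Set.range (θ : G → F)) := by
      rcases eq_or_ne (ν (Set.range (θ : G → F))) 0 with h0 | h0
      · exfalso
        have := habs h0
        rw [Measure.map_apply hθm hrmeas, Set.preimage_range] at this
        exact ((Measure.measure_univ_pos (μ := μ)).mpr (NeZero.ne μ)).ne' this
      · exact h0.bot_lt
    have h1 : Set.range (θ : G → F) / Set.range (θ : G → F) ∈ nhds (1 : F) :=
      Measure.div_mem_nhds_one_of_haar_pos ν _ hrmeas hpos
    have hsub : Set.range (θ : G → F) / Set.range (θ : G → F) ⊆ Set.range (θ : G → F) := by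
      rintro w hw
      rw [Set.mem_div] at hw
      obtain ⟨a, ⟨x, rfl⟩, b, ⟨y, rfl⟩, rfl⟩ := hw
      exact ⟨x * y⁻¹, by simp [div_eq_mul_inv]⟩
    have hopen := Subgroup.isOpen_of_mem_nhds θ.range (Filter.mem_of_superset h1 hsub)
    simpa [MonoidHom.coe_range] using hopen
  · intro hopen
    refine Measure.AbsolutelyContinuous.mk fun s hs hνs => ?_
    rw [Measure.map_apply hθm hs]
    set T : Set (G × F) := (fun p : G × F => θ p.1 * p.2) ⁻¹' s with hT
    have hTmeas : MeasurableSet T :=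
      ((hθm.comp measurable_fst).mul measurable_snd) hs
    have hT0 : (μ.prod ν) T = 0 := by
      rw [Measure.prod_apply hTmeas]
      have hx : ∀ x : G, ν (Prod.mk x ⁻¹' T) = 0 := by
        intro x
        have : Prod.mk x ⁻¹' T = (fun z => θ x * z) ⁻¹' s := rfl
        rw [this, measure_preimage_mul ν (θ x) s, hνs]
      simp [hx]
    have h2 : ∫⁻ z, μ ((fun x => (x, z)) ⁻¹' T) ∂ν = 0 := by
      rw [← Measure.prod_apply_symm hTmeas, hT0]
    have hae : ∀ᵐ z ∂ν, μ ((fun x => (x, z)) ⁻¹' T) = 0 := by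
      rw [lintegral_eq_zero_iff (measurable_measure_prodMk_right hTmeas)] at h2
      exact h2
    have hfreq : ∃ᵐ z ∂ν, z ∈ Set.range (θ : G → F) :=
      frequently_ae_mem_iff.mpr
        (hopen.measure_ne_zero ν ⟨θ 1, 1, rfl⟩)
    obtain ⟨z, ⟨g, rfl⟩, hz0⟩ := (hfreq.and_eventually hae).exists
    have hset : (fun x => (x, θ g)) ⁻¹' T = (fun x => x * g) ⁻¹' (θ ⁻¹' s) := by
      ext x
      simp [T, Set.mem_preimage, map_mul]
    rw [hset, measure_mul_right_null] at hz0
    exact hz0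
end

section
/- Let G and F be locally compact, second countable Hausdorff topological groups with left Haar measures μ (on G) and ν (on F). Let K be an open subgroup of G, let t₀ ∈ G, s₀ ∈ F, let θ: K → F be a continuous homomorphism or a continuous anti-homomorphism, and let α: C → F be the continuous affine (or anti-affine) map defined on the coset C = t₀⁻¹K by α(t) = s₀·θ(t₀t). Then the pushforward measure α_*μ_C is absolutely continuous with respect to ν if and only if α(C) is an open subset of F. -/
open MeasureTheory Set Pointwise

/-- Auxiliary lemma: if `θ : G → F` is continuous on an open subgroup `K` and satisfies
`θ (x*y) = op (θ x) (θ y)` for an operation `op` (either `mul` or swapped `mul`), the image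
`θ '' K` is open, and `E₂` is a `ν`-null measurable set, then `μ (K ∩ θ⁻¹ E₂) = 0`. -/
lemma aux_stmt3
    {G F : Type*} [Group G] [TopologicalSpace G] [IsTopologicalGroup G]
    [LocallyCompactSpace G] [SecondCountableTopology G] [T2Space G]
    [MeasurableSpace G] [BorelSpace G]
    [Group F] [TopologicalSpace F] [IsTopologicalGroup F]
    [LocallyCompactSpace F] [SecondCountableTopology F] [T2Space F]
    [MeasurableSpace F] [BorelSpace F]
    (μ : Measure G) [μ.IsHaarMeasure] (ν : Measure F) [ν.IsHaarMeasure]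
    (K : Subgroup G) (hK : IsOpen (K : Set G)) (θ : G → F)
    (hθc : ContinuousOn θ (K : Set G))
    (op : F → F → F) (hopm : Measurable fun p : F × F => op p.1 p.2)
    (hop1 : ∀ x ∈ K, ∀ y ∈ K, θ (x * y) = op (θ x) (θ y))
    (hop2 : ∀ (b : F) (S : Set F), ν S = 0 → ν ((fun a => op a b) ⁻¹' S) = 0)
    (hHopen : IsOpen (θ '' (K : Set G)))
    (E₂ : Set F) (hE₂ : MeasurableSet E₂) (hνE₂ : ν E₂ = 0) :
    μ ((K : Set G) ∩ θ ⁻¹' E₂) = 0 := by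
  have hKmeas : MeasurableSet (K : Set G) := hK.measurableSet
  have hθae : AEMeasurable θ (μ.restrict (K : Set G)) := hθc.aemeasurable hKmeas
  set μK := μ.restrict (K : Set G) with hμK
  obtain ⟨g, hg, hgθ⟩ : ∃ g : G → F, Measurable g ∧ θ =ᵐ[μK] g :=
    ⟨hθae.mk θ, hθae.measurable_mk, hθae.ae_eq_mk⟩
  have hcong : ∀ (f₁ f₂ : G → F), f₁ =ᵐ[μK] f₂ → ∀ S : Set F,
      μK (f₁ ⁻¹' S) = μK (f₂ ⁻¹' S) := by
    intro f₁ f₂ hf S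
    apply measure_congr
    filter_upwards [hf] with x hx
    show (f₁ x ∈ S) = (f₂ x ∈ S)
    rw [hx]
  set L := μK (g ⁻¹' E₂) with hL
  have hLθ : μK (θ ⁻¹' E₂) = L := hcong θ g hgθ E₂
  have hHmeas : MeasurableSet (θ '' (K : Set G)) := hHopen.measurableSet
  -- invariance of the pushforward under `op h ·` for `h` in the image
  have hinv : ∀ h ∈ θ '' (K : Set G), μK ((fun t => op h (g t)) ⁻¹' E₂) = L := by
    rintro h ⟨k₀, hk₀, rfl⟩
    have hae : (fun t => op (θ k₀) (θ t)) =ᵐ[μK] fun t => op (θ k₀) (g t) := by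
      filter_upwards [hgθ] with x hx
      rw [hx]
    have e2 : {t | op (θ k₀) (θ t) ∈ E₂} ∩ (K : Set G)
        = (fun t => k₀ * t) ⁻¹' (θ ⁻¹' E₂ ∩ (K : Set G)) := by
      ext t
      simp only [mem_inter_iff, mem_preimage, mem_setOf_eq, SetLike.mem_coe]
      constructor
      · rintro ⟨h1, h2⟩
        exact ⟨by rwa [hop1 k₀ hk₀ t h2], K.mul_mem hk₀ h2⟩
      · rintro ⟨h1, h2⟩
        have h2' : t ∈ K := by
          have := K.mul_mem (K.inv_mem hk₀) h2
          rwa [inv_mul_cancel_left] at this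
        exact ⟨by rw [← hop1 k₀ hk₀ t h2']; exact h1, h2'⟩
    calc μK ((fun t => op (θ k₀) (g t)) ⁻¹' E₂)
        = μK ((fun t => op (θ k₀) (θ t)) ⁻¹' E₂) := (hcong _ _ hae E₂).symm
      _ = μ ({t | op (θ k₀) (θ t) ∈ E₂} ∩ (K : Set G)) := Measure.restrict_apply' hKmeas
      _ = μ ((fun t => k₀ * t) ⁻¹' (θ ⁻¹' E₂ ∩ (K : Set G))) := by rw [e2]
      _ = μ (θ ⁻¹' E₂ ∩ (K : Set G)) := measure_preimage_mul μ k₀ _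
      _ = μK (θ ⁻¹' E₂) := (Measure.restrict_apply' hKmeas).symm
      _ = L := hLθ
  -- the double integral
  set I := ∫⁻ h in θ '' (K : Set G), μK ((fun t => op h (g t)) ⁻¹' E₂) ∂ν with hI
  have hIeq : I = L * ν (θ '' (K : Set G)) := by
    rw [hI, setLIntegral_congr_fun hHmeas (fun h hh => hinv h hh),
      setLIntegral_const]
  have e3 : ∀ (ρ : Measure G) (h : F), ρ ((fun t => op h (g t)) ⁻¹' E₂)
      = ∫⁻ t, E₂.indicator 1 (op h (g t)) ∂ρ := by
    intro ρ h
    have hm : Measurable fun t => op h (g t) := hopm.comp (measurable_const.prodMk hg)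
    rw [← lintegral_indicator_one (hm hE₂)]
    refine lintegral_congr fun t => ?_
    rfl
  have e3' : ∀ (ρ : Measure F) (t : G), ρ ((fun h => op h (g t)) ⁻¹' E₂)
      = ∫⁻ h, E₂.indicator 1 (op h (g t)) ∂ρ := by
    intro ρ t
    have hm : Measurable fun h => op h (g t) := hopm.comp (measurable_id.prodMk measurable_const)
    rw [← lintegral_indicator_one (hm hE₂)]
    refine lintegral_congr fun h => ?_
    rfl
  have hIzero : I = 0 := by
    have hind : Measurable (E₂.indicator (1 : F → ENNReal)) :=
      measurable_one.indicator hE₂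
    have hmeas : AEMeasurable (Function.uncurry fun h t => E₂.indicator 1 (op h (g t)))
        ((ν.restrict (θ '' (K : Set G))).prod μK) :=
      (hind.comp (hopm.comp (measurable_fst.prodMk (hg.comp measurable_snd)))).aemeasurable
    calc I = ∫⁻ h in θ '' (K : Set G), ∫⁻ t, E₂.indicator 1 (op h (g t)) ∂μK ∂ν :=
          lintegral_congr fun h => e3 μK h
      _ = ∫⁻ t, ∫⁻ h in θ '' (K : Set G), E₂.indicator 1 (op h (g t)) ∂ν ∂μK :=
          lintegral_lintegral_swap hmeas
      _ = 0 := by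
          have hz : ∀ t : G,
              (∫⁻ h in θ '' (K : Set G), E₂.indicator 1 (op h (g t)) ∂ν) = 0 := by
            intro t
            rw [← e3' (ν.restrict (θ '' (K : Set G))) t]
            have h0 : ν ((fun h => op h (g t)) ⁻¹' E₂) = 0 := hop2 (g t) E₂ hνE₂
            have hm : Measurable fun h => op h (g t) :=
              hopm.comp (measurable_id.prodMk measurable_const)
            rw [Measure.restrict_apply (hm hE₂)]
            exact measure_mono_null inter_subset_left h0
          simp only [hz, lintegral_zero]
  have hν0 : ν (θ '' (K : Set G)) ≠ 0 :=
    (hHopen.measure_pos ν ⟨θ 1, 1, K.one_mem, rfl⟩).ne'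
  have hL0 : L = 0 := by
    rcases mul_eq_zero.mp (hIeq ▸ hIzero : L * ν (θ '' (K : Set G)) = 0) with h | h
    · exact h
    · exact absurd h hν0
  calc μ ((K : Set G) ∩ θ ⁻¹' E₂) = μ (θ ⁻¹' E₂ ∩ (K : Set G)) := by rw [inter_comm]
    _ = μK (θ ⁻¹' E₂) := (Measure.restrict_apply' hKmeas).symm
    _ = L := hLθ
    _ = 0 := hL0

/-- Corollary 2.5: for a continuous affine (or anti-affine) map `α : C → F`,
`α(t) = s₀ · θ(t₀ t)` on the coset `C = t₀⁻¹K` of an open subgroup `K` of `G`,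
the pushforward `α_* μ_C` is absolutely continuous with respect to the Haar measure `ν`
iff `α(C)` is open in `F`. -/
theorem stmt3
    {G F : Type*} [Group G] [TopologicalSpace G] [IsTopologicalGroup G]
    [LocallyCompactSpace G] [SecondCountableTopology G] [T2Space G]
    [MeasurableSpace G] [BorelSpace G]
    [Group F] [TopologicalSpace F] [IsTopologicalGroup F]
    [LocallyCompactSpace F] [SecondCountableTopology F] [T2Space F]
    [MeasurableSpace F] [BorelSpace F]
    (μ : Measure G) [μ.IsHaarMeasure] (ν : Measure F) [ν.IsHaarMeasure]
    (K : Subgroup G) (hK : IsOpen (K : Set G)) (t₀ : G) (s₀ : F)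
    (θ : G → F) (hθc : ContinuousOn θ (K : Set G))
    (hθhom : (∀ x ∈ K, ∀ y ∈ K, θ (x * y) = θ x * θ y) ∨
             (∀ x ∈ K, ∀ y ∈ K, θ (x * y) = θ y * θ x))
    (C : Set G) (hC : C = {t : G | t₀ * t ∈ K})
    (α : G → F) (hα : ∀ t ∈ C, α t = s₀ * θ (t₀ * t)) :
    Measure.map α (μ.restrict C) ≪ ν ↔ IsOpen (α '' C) := by
  subst hC
  set C : Set G := {t : G | t₀ * t ∈ K} with hCdef
  have hCopen : IsOpen C := hK.preimage (continuous_mul_left t₀)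
  have hCmeas : MeasurableSet C := hCopen.measurableSet
  have hKmeas : MeasurableSet (K : Set G) := hK.measurableSet
  have hαc : ContinuousOn α C := by
    refine ContinuousOn.congr (f := fun t => s₀ * θ (t₀ * t)) ?_ fun t ht => hα t ht
    exact continuousOn_const.mul
      (hθc.comp (continuous_mul_left t₀).continuousOn fun t ht => ht)
  have hαae : AEMeasurable α (μ.restrict C) := hαc.aemeasurable hCmeas
  have key : ∀ E : Set F, MeasurableSet E → Measure.map α (μ.restrict C) E
      = μ ((K : Set G) ∩ θ ⁻¹' ((fun x => s₀ * x) ⁻¹' E)) := by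
    intro E hE
    rw [Measure.map_apply_of_aemeasurable hαae hE, Measure.restrict_apply' hCmeas]
    have hset : α ⁻¹' E ∩ C
        = (fun t => t₀ * t) ⁻¹' ((K : Set G) ∩ θ ⁻¹' ((fun x => s₀ * x) ⁻¹' E)) := by
      ext t
      simp only [mem_inter_iff, mem_preimage, mem_setOf_eq, SetLike.mem_coe]
      constructor
      · rintro ⟨h1, h2⟩
        refine ⟨h2, ?_⟩
        show s₀ * θ (t₀ * t) ∈ E
        rw [← hα t h2]; exact h1
      · rintro ⟨h1, h2⟩
        refine ⟨?_, h1⟩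
        rw [hα t h1]; exact h2
    rw [hset, measure_preimage_mul]
  have himg : α '' C = (fun x => s₀ * x) '' (θ '' (K : Set G)) := by
    ext s
    simp only [mem_image]
    constructor
    · rintro ⟨t, ht, rfl⟩
      exact ⟨θ (t₀ * t), ⟨t₀ * t, ht, rfl⟩, (hα t ht).symm⟩
    · rintro ⟨x, ⟨k, hk, rfl⟩, rfl⟩
      refine ⟨t₀⁻¹ * k, ?_, ?_⟩
      · show t₀ * (t₀⁻¹ * k) ∈ K
        rwa [mul_inv_cancel_left]
      · rw [hα (t₀⁻¹ * k) (by show t₀ * (t₀⁻¹ * k) ∈ K; rwa [mul_inv_cancel_left]),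
          mul_inv_cancel_left]
  have hopen_iff : IsOpen (α '' C) ↔ IsOpen (θ '' (K : Set G)) := by
    rw [himg]
    exact (Homeomorph.mulLeft s₀).isOpen_image
  rw [hopen_iff]
  constructor
  · -- absolutely continuous → image open
    intro habs
    have hKsc : IsSigmaCompact (K : Set G) :=
      isSigmaCompact_univ.of_isClosed_subset (K.isClosed_of_isOpen hK) (subset_univ _)
    have hHsc : IsSigmaCompact (θ '' (K : Set G)) := hKsc.image_of_continuousOn hθc
    have hHmeas : MeasurableSet (θ '' (K : Set G)) := by
      obtain ⟨Ks, hKc, hKu⟩ := hHsc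
      rw [← hKu]
      exact MeasurableSet.iUnion fun n => (hKc n).isClosed.measurableSet
    have hνH : ν (θ '' (K : Set G)) ≠ 0 := by
      intro h0
      have hE : MeasurableSet ((fun x => s₀ * x) '' (θ '' (K : Set G))) := by
        rw [image_mul_left]
        exact hHmeas.preimage (measurable_const_mul s₀⁻¹)
      have hν0 : ν ((fun x => s₀ * x) '' (θ '' (K : Set G))) = 0 := by
        rw [image_mul_left, measure_preimage_mul]
        exact h0
      have h1 := habs hν0
      rw [key _ hE] at h1
      have hsub : (K : Set G) ⊆ θ ⁻¹' ((fun x => s₀ * x) ⁻¹'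
          ((fun x => s₀ * x) '' (θ '' (K : Set G)))) := fun k hk =>
        mem_preimage.mpr (mem_preimage.mpr (mem_image_of_mem _ (mem_image_of_mem θ hk)))
      rw [inter_eq_self_of_subset_left hsub] at h1
      exact (hK.measure_pos μ ⟨1, K.one_mem⟩).ne' h1
    have hnhds : (θ '' (K : Set G)) / (θ '' (K : Set G)) ∈ nhds (1 : F) :=
      Measure.div_mem_nhds_one_of_haar_pos ν (θ '' (K : Set G)) hHmeas (pos_iff_ne_zero.mpr hνH)
    -- the image is a subgroup
    have hone : θ 1 = 1 := by
      rcases hθhom with h | h <;>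
      · have h1 := h 1 K.one_mem 1 K.one_mem
        rw [one_mul] at h1
        exact (left_eq_mul.mp h1)
    have hmul : ∀ a ∈ θ '' (K : Set G), ∀ b ∈ θ '' (K : Set G),
        a * b ∈ θ '' (K : Set G) := by
      rintro a ⟨x, hx, rfl⟩ b ⟨y, hy, rfl⟩
      rcases hθhom with h | h
      · exact ⟨x * y, K.mul_mem hx hy, h x hx y hy⟩
      · exact ⟨y * x, K.mul_mem hy hx, h y hy x hx⟩
    have hinv : ∀ a ∈ θ '' (K : Set G), a⁻¹ ∈ θ '' (K : Set G) := by
      rintro a ⟨x, hx, rfl⟩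
      refine ⟨x⁻¹, K.inv_mem hx, ?_⟩
      rcases hθhom with h | h
      · have h1 := h x⁻¹ (K.inv_mem hx) x hx
        rw [inv_mul_cancel, hone] at h1
        exact eq_inv_of_mul_eq_one_left h1.symm
      · have h1 := h x⁻¹ (K.inv_mem hx) x hx
        rw [inv_mul_cancel, hone] at h1
        exact eq_inv_of_mul_eq_one_right h1.symm
    let Hgrp : Subgroup F :=
      { carrier := θ '' (K : Set G)
        one_mem' := ⟨1, K.one_mem, hone⟩
        mul_mem' := fun ha hb => hmul _ ha _ hb
        inv_mem' := fun ha => hinv _ ha }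
    have hdiv : (θ '' (K : Set G)) / (θ '' (K : Set G)) ⊆ θ '' (K : Set G) := by
      rintro x hx
      rcases mem_div.mp hx with ⟨a, ha, b, hb, rfl⟩
      exact Hgrp.div_mem ha hb
    exact Subgroup.isOpen_of_mem_nhds Hgrp (Filter.mem_of_superset hnhds hdiv)
  · -- image open → absolutely continuous
    intro hHopen
    refine Measure.AbsolutelyContinuous.mk fun E hE hνE => ?_
    rw [key E hE]
    have hE₂ : MeasurableSet ((fun x => s₀ * x) ⁻¹' E) :=
      hE.preimage (measurable_const_mul s₀)
    have hνE₂ : ν ((fun x => s₀ * x) ⁻¹' E) = 0 :=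
      (measure_preimage_mul ν s₀ E).trans hνE
    rcases hθhom with h | h
    · exact aux_stmt3 μ ν K hK θ hθc (· * ·) (measurable_fst.mul measurable_snd) h
        (fun b S hS => (measure_mul_right_null ν b).mpr hS) hHopen _ hE₂ hνE₂
    · exact aux_stmt3 μ ν K hK θ hθc (fun a b => b * a)
        (measurable_snd.mul measurable_fst) h
        (fun b S hS => by
          have : (fun a => b * a) ⁻¹' S = ((fun a b => b * a) · b) ⁻¹' S := rfl
          rw [← this, measure_preimage_mul]
          exact hS) hHopen _ hE₂ hνE₂
end
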